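/- arXiv:0911.3982 — 4 statements merged into one kernel-verified Lean document; each statement's English description precedes it below -/
import Mathlib

section
/- The set of asymptoty classes of geodesic rays from the origin in ℤ² with the standard word metric has the cardinality of the continuum. -/
/-- A geodesic ray from `0` in `Cay(ℤ², {(1,0),(0,1)})`, given by its sequence
of unit steps. -/
def IsGeodesicStepSeq (w : ℕ → ℤ × ℤ) : Prop :=
  (∀ i, w i = (1, 0) ∨ w i = (-1, 0) ∨ w i = (0, 1) ∨ w i = (0, -1)) ∧
  ∀ n : ℕ, |(∑ i ∈ Finset.range n, w i).1| + |(∑ i ∈ Finset.range n, w i).2| = n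

/-- Position of the ray after `n` steps. -/
def rayPos (w : ℕ → ℤ × ℤ) (n : ℕ) : ℤ × ℤ := ∑ i ∈ Finset.range n, w i

/-- Two rays are asymptotic if their positions stay at uniformly bounded ℓ¹
distance. -/
def Asymp (w w' : {w : ℕ → ℤ × ℤ // IsGeodesicStepSeq w}) : Prop :=
  ∃ M : ℤ, ∀ n : ℕ,
    |(rayPos w.1 n).1 - (rayPos w'.1 n).1| + |(rayPos w.1 n).2 - (rayPos w'.1 n).2| ≤ M

/-!
For a slope `θ ∈ [0, 1]` the staircase with `x`-coordinate `⌊θ n⌋` after `n` steps only moves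
right or up, hence is a geodesic ray. Staircases of distinct slopes drift apart linearly, so
`[0, 1]` injects into the boundary; conversely there are only continuum many step sequences.
-/

open Cardinal

theorem asymp_equivalence : Equivalence Asymp := by
  refine ⟨fun w => ⟨0, fun n => by simp⟩, ?_, ?_⟩
  · rintro w w' ⟨M, hM⟩
    refine ⟨M, fun n => ?_⟩
    rw [abs_sub_comm, abs_sub_comm (rayPos w'.1 n).2]
    exact hM n
  · rintro w w' w'' ⟨M, hM⟩ ⟨M', hM'⟩
    refine ⟨M + M', fun n => ?_⟩
    have h₁ := abs_sub_le (rayPos w.1 n).1 (rayPos w'.1 n).1 (rayPos w''.1 n).1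
    have h₂ := abs_sub_le (rayPos w.1 n).2 (rayPos w'.1 n).2 (rayPos w''.1 n).2
    linarith [hM n, hM' n]

section Staircase

def staircase (f : ℕ → ℤ) (n : ℕ) : ℤ × ℤ := (f (n + 1) - f n, 1 - (f (n + 1) - f n))

theorem rayPos_staircase (f : ℕ → ℤ) (n : ℕ) :
    rayPos (staircase f) n = (f n - f 0, n - (f n - f 0)) := by
  ext <;> simp only [rayPos, staircase, Prod.fst_sum, Prod.snd_sum]
  · exact Finset.sum_range_sub f n
  · rw [Finset.sum_sub_distrib, Finset.sum_range_sub]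
    simp

variable {f : ℕ → ℤ} (hf : ∀ n, f n ≤ f (n + 1) ∧ f (n + 1) ≤ f n + 1)
include hf

theorem sub_apply_zero_mem_Icc (n : ℕ) : f n - f 0 ∈ Set.Icc 0 (n : ℤ) := by
  induction n with
  | zero => simp
  | succ n ih => have := hf n; simp only [Set.mem_Icc] at ih ⊢; push_cast; omega

theorem isGeodesicStepSeq_staircase : IsGeodesicStepSeq (staircase f) := by
  refine ⟨fun i => ?_, fun n => ?_⟩
  · rcases (by have := hf i; omega : f (i + 1) - f i = 1 ∨ f (i + 1) - f i = 0) with h | h <;>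
      simp [staircase, h]
  · obtain ⟨h₀, hₙ⟩ := sub_apply_zero_mem_Icc hf n
    rw [← rayPos, rayPos_staircase, abs_of_nonneg h₀, abs_of_nonneg (by omega)]
    omega

end Staircase

section Slope

theorem floor_mul_succ_mem_Icc {θ : ℝ} (hθ : θ ∈ Set.Icc (0 : ℝ) 1) (n : ℕ) :
    ⌊θ * n⌋ ≤ ⌊θ * ↑(n + 1)⌋ ∧ ⌊θ * ↑(n + 1)⌋ ≤ ⌊θ * n⌋ + 1 := by
  push_cast
  refine ⟨Int.floor_mono (by nlinarith [hθ.1]), ?_⟩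
  rw [← Int.floor_add_one]
  exact Int.floor_mono (by linarith [hθ.2])

theorem eq_of_abs_floor_mul_sub_le {θ θ' : ℝ} {M : ℤ}
    (h : ∀ n : ℕ, |⌊θ * n⌋ - ⌊θ' * n⌋| ≤ M) : θ = θ' := by
  have hlin : ∀ n : ℕ, |θ - θ'| * n ≤ M + 1 := fun n => by
    have hn : (|⌊θ * n⌋ - ⌊θ' * n⌋| : ℝ) ≤ M := by exact_mod_cast h n
    calc |θ - θ'| * n = |θ * n - θ' * n| := by rw [← sub_mul, abs_mul, Nat.abs_cast]
      _ ≤ M + 1 := by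
        rw [abs_le] at hn ⊢
        constructor <;>
          linarith [Int.floor_le (θ * n), Int.lt_floor_add_one (θ * n),
            Int.floor_le (θ' * n), Int.lt_floor_add_one (θ' * n)]
  by_contra hne
  have hpos : 0 < |θ - θ'| := abs_pos.mpr (sub_ne_zero.mpr hne)
  obtain ⟨n, hn⟩ := exists_nat_gt ((M + 1) / |θ - θ'|)
  rw [div_lt_iff₀ hpos] at hn
  linarith [hlin n]

noncomputable def slopeRay (θ : Set.Icc (0 : ℝ) 1) : {w : ℕ → ℤ × ℤ // IsGeodesicStepSeq w} :=
  ⟨staircase fun n => ⌊θ.1 * n⌋, isGeodesicStepSeq_staircase (floor_mul_succ_mem_Icc θ.2)⟩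

theorem eq_of_asymp_slopeRay {θ θ' : Set.Icc (0 : ℝ) 1} (h : Asymp (slopeRay θ) (slopeRay θ')) :
    θ = θ' := by
  obtain ⟨M, hM⟩ := h
  refine Subtype.ext (eq_of_abs_floor_mul_sub_le (M := M) fun n => ?_)
  have := hM n
  simp only [slopeRay, rayPos_staircase, Nat.cast_zero, mul_zero, Int.floor_zero, sub_zero] at this
  linarith [abs_nonneg (((n : ℤ) - ⌊θ.1 * n⌋) - (n - ⌊θ'.1 * n⌋))]

theorem injective_quotMk_slopeRay : Function.Injective (Quot.mk Asymp ∘ slopeRay) :=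
  fun _ _ h => eq_of_asymp_slopeRay (asymp_equivalence.eqvGen_iff.mp (Quot.eq.mp h))

end Slope

/-- the set of asymptoty classes of geodesic rays from the origin
in `ℤ²` has the cardinality of the continuum. -/
theorem boundary_Z2_card_continuum :
    Cardinal.mk (Quot Asymp) = Cardinal.continuum := by
  apply le_antisymm
  · calc #(Quot Asymp) ≤ #{w : ℕ → ℤ × ℤ // IsGeodesicStepSeq w} := mk_quot_le
      _ ≤ #(ℕ → ℤ × ℤ) := mk_subtype_le _
      _ = 𝔠 := by simp
  · calc 𝔠 = #(Set.Icc (0 : ℝ) 1) := (mk_Icc_real zero_lt_one).symm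
      _ ≤ #(Quot Asymp) := mk_le_of_injective injective_quotMk_slopeRay
end

section
/- The visual boundary of ℤ² with the standard generating set carries the trivial (indiscrete) topology: the only open subsets of ∂_∞(ℤ²) are ∅ and ∂_∞(ℤ²) itself. -/
open scoped NNReal UniformConvergence

/-- `ℝ²` with the ℓ¹ metric. -/
abbrev PlaneL1 : Type := PiLp 1 (fun _ : Fin 2 => ℝ)

/-- The Cayley graph of `ℤ²` with the standard generators, realized as the
integer grid inside `(ℝ², ℓ¹)`. -/
def Grid : Set PlaneL1 := {p | (∃ n : ℤ, p 0 = (n : ℝ)) ∨ ∃ n : ℤ, p 1 = (n : ℝ)}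

/-- The space of unit-speed geodesic rays from `0` in `Cay(ℤ², {(1,0),(0,1)})`,
viewed as maps `[0,∞) → Cay(ℤ²) ⊆ (ℝ², ℓ¹)` traversing edges at unit speed,
with the topology of uniform convergence on compact sets. -/
def RaySpace : Type :=
  {f : ℝ≥0 →ᵤ[{K : Set ℝ≥0 | IsCompact K}] PlaneL1 //
    (UniformOnFun.toFun _ f) 0 = 0 ∧
    (∀ t : ℝ≥0, (UniformOnFun.toFun _ f) t ∈ Grid) ∧
    ∀ s t : ℝ≥0, dist ((UniformOnFun.toFun _ f) s) ((UniformOnFun.toFun _ f) t) = dist s t}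

noncomputable instance : TopologicalSpace RaySpace :=
  inferInstanceAs (TopologicalSpace
    {f : ℝ≥0 →ᵤ[{K : Set ℝ≥0 | IsCompact K}] PlaneL1 //
      (UniformOnFun.toFun _ f) 0 = 0 ∧
      (∀ t : ℝ≥0, (UniformOnFun.toFun _ f) t ∈ Grid) ∧
      ∀ s t : ℝ≥0, dist ((UniformOnFun.toFun _ f) s) ((UniformOnFun.toFun _ f) t) = dist s t})

/-- The asymptotic relation on geodesic rays. -/
def AsympRel (f g : RaySpace) : Prop :=
  ∃ M : ℝ, ∀ t : ℝ≥0,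
    dist ((UniformOnFun.toFun _ f.1) t) ((UniformOnFun.toFun _ g.1) t) ≤ M

/-- The visual boundary `∂_∞(ℤ²)` with the quotient topology. -/
def VisualBoundary : Type := Quot AsympRel

noncomputable instance : TopologicalSpace VisualBoundary :=
  inferInstanceAs (TopologicalSpace (Quot AsympRel))

/-!
A geodesic ray from `0` in the `ℓ¹` grid is monotone in each coordinate, so it runs inside a
closed quadrant, and at integer times it sits at lattice points. A neighbourhood of a ray `f`
in the compact-open topology only constrains `f` on some interval `[0, n]`, and following `f`
up to time `n` and then a translate of any ray `g` running in the same quadrant gives a ray in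
that neighbourhood which stays within distance `2n` of `g`. So an open set of the boundary
containing `[f]` contains `[g]` for every such `g`, and any two rays are linked by the chain
`f`, horizontal axis ray, vertical axis ray, `g`, consecutive members sharing a quadrant.
-/

open Topology

lemma abs_add_eq_add_abs_iff_mul_nonneg {α : Type*} [Ring α] [LinearOrder α]
    [IsStrictOrderedRing α] (a b : α) : |a + b| = |a| + |b| ↔ 0 ≤ a * b := by
  rw [abs_add_eq_add_abs_iff, mul_nonneg_iff]

lemma exists_abs_eq_one_monotone_mul {α : Type*} [LinearOrder α] {φ : α → ℝ}
    (h : ∀ u t, u ≤ t → 0 ≤ φ u * (φ t - φ u)) :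
    ∃ ε : ℝ, |ε| = 1 ∧ Monotone fun t => ε * φ t := by
  by_cases hφ : ∀ t, 0 ≤ φ t
  · refine ⟨1, abs_one, fun u t hut => ?_⟩
    nlinarith [h u t hut, hφ u, hφ t]
  · obtain ⟨a, ha⟩ := not_forall.1 hφ
    have hφ' : ∀ t, φ t ≤ 0 := fun b => by
      rcases le_total a b with hab | hba
      · nlinarith [h a b hab]
      · nlinarith [h b a hba]
    refine ⟨-1, by simp, fun u t hut => ?_⟩
    nlinarith [h u t hut, hφ' u, hφ' t]

namespace PlaneL1

lemma dist_eq (p q : PlaneL1) : dist p q = |p 0 - q 0| + |p 1 - q 1| := by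
  simp [PiLp.dist_eq_of_L1, Fin.sum_univ_two, Real.dist_eq]

lemma norm_eq (p : PlaneL1) : ‖p‖ = |p 0| + |p 1| := by
  simp [PiLp.norm_eq_of_L1, Fin.sum_univ_two]

lemma dist_add_eq_of_mul_nonneg {p q r : PlaneL1} (h : ∀ i, 0 ≤ (q i - p i) * r i) :
    dist p (q + r) = dist p q + ‖r‖ := by
  have key (i : Fin 2) : |p i - (q + r) i| = |p i - q i| + |r i| := by
    rw [PiLp.add_apply, abs_sub_comm, abs_sub_comm (p i),
      show q i + r i - p i = (q i - p i) + r i by ring, abs_add_eq_add_abs_iff_mul_nonneg]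
    exact h i
  rw [dist_eq, dist_eq, norm_eq, key, key]
  ring

end PlaneL1

def IntPoints : Set PlaneL1 := {p | ∀ i, ∃ n : ℤ, p i = n}

lemma add_mem_grid {p q : PlaneL1} (hp : p ∈ IntPoints) (hq : q ∈ Grid) : p + q ∈ Grid := by
  obtain ⟨⟨m₀, hm₀⟩, ⟨m₁, hm₁⟩⟩ := hp 0, hp 1
  rcases hq with ⟨n, hn⟩ | ⟨n, hn⟩
  · exact Or.inl ⟨m₀ + n, by simp [hm₀, hn]⟩
  · exact Or.inr ⟨m₁ + n, by simp [hm₁, hn]⟩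

lemma exists_intCast_of_abs_add_abs_eq {x y : ℝ} {m n : ℤ} (hxy : |x| + |y| = n) (hx : x = m) :
    ∃ k : ℤ, y = k := by
  rcases abs_choice y with hy | hy
  · exact ⟨n - |m|, by push_cast; rw [← hx]; linarith⟩
  · exact ⟨|m| - n, by push_cast; rw [← hx]; linarith⟩

theorem UniformOnFun.exists_forall_eqOn_imp_mem {α β : Type*} [UniformSpace β]
    {𝔖 : Set (Set α)} (h : 𝔖.Nonempty) (h' : DirectedOn (· ⊆ ·) 𝔖) {f : α →ᵤ[𝔖] β}
    {W : Set (α →ᵤ[𝔖] β)} (hW : W ∈ 𝓝 f) :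
    ∃ S ∈ 𝔖, ∀ g : α →ᵤ[𝔖] β, Set.EqOn (toFun 𝔖 g) (toFun 𝔖 f) S → g ∈ W := by
  obtain ⟨⟨S, V⟩, ⟨hS, hV⟩, hSV⟩ := (UniformOnFun.hasBasis_nhds α β 𝔖 f h h').mem_iff.1 hW
  exact ⟨S, hS, fun g hg => hSV fun x hx => by rw [hg hx]; exact refl_mem_uniformity hV⟩

lemma dist_eq_dist_of_forall_le {X : Type*} [PseudoMetricSpace X] {H : ℝ≥0 → X}
    (h : ∀ s t, s ≤ t → dist (H s) (H t) = t - s) (s t : ℝ≥0) :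
    dist (H s) (H t) = dist s t := by
  rw [NNReal.dist_eq]
  rcases le_total s t with hst | hts
  · rw [h s t hst, abs_sub_comm, abs_of_nonneg (sub_nonneg.2 (NNReal.coe_le_coe.2 hst))]
  · rw [dist_comm, h t s hts, abs_of_nonneg (sub_nonneg.2 (NNReal.coe_le_coe.2 hts))]

namespace RaySpace

@[coe] def toFun (f : RaySpace) : ℝ≥0 → PlaneL1 := UniformOnFun.toFun _ f.1

instance : CoeFun RaySpace fun _ => ℝ≥0 → PlaneL1 := ⟨toFun⟩

def ofFun (H : ℝ≥0 → PlaneL1) (h0 : H 0 = 0) (hgrid : ∀ t, H t ∈ Grid)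
    (hdist : ∀ s t, dist (H s) (H t) = dist s t) : RaySpace :=
  ⟨UniformOnFun.ofFun _ H, h0, hgrid, hdist⟩

@[simp] lemma coe_ofFun (H : ℝ≥0 → PlaneL1) (h0 hgrid hdist) : ⇑(ofFun H h0 hgrid hdist) = H :=
  rfl

variable (f : RaySpace)

lemma apply_zero : f 0 = 0 := f.2.1

lemma apply_mem_grid (t : ℝ≥0) : f t ∈ Grid := f.2.2.1 t

lemma dist_apply (s t : ℝ≥0) : dist (f s) (f t) = dist s t := f.2.2.2 s t

lemma dist_apply_of_le {s t : ℝ≥0} (hst : s ≤ t) : dist (f s) (f t) = t - s := by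
  rw [dist_apply, NNReal.dist_eq, abs_sub_comm,
    abs_of_nonneg (sub_nonneg.2 (NNReal.coe_le_coe.2 hst))]

lemma norm_apply (t : ℝ≥0) : ‖f t‖ = t := by
  simpa [f.apply_zero] using f.dist_apply_of_le zero_le

lemma apply_natCast_mem_intPoints (n : ℕ) : f n ∈ IntPoints := by
  have hnorm : |f n 0| + |f n 1| = ((n : ℤ) : ℝ) := by
    rw [← PlaneL1.norm_eq, norm_apply]; simp
  rcases f.apply_mem_grid n with ⟨m, hm⟩ | ⟨m, hm⟩
  · obtain ⟨k, hk⟩ := exists_intCast_of_abs_add_abs_eq hnorm hm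
    exact Fin.forall_fin_two.2 ⟨⟨m, hm⟩, ⟨k, hk⟩⟩
  · obtain ⟨k, hk⟩ := exists_intCast_of_abs_add_abs_eq (by rwa [add_comm] at hnorm) hm
    exact Fin.forall_fin_two.2 ⟨⟨k, hk⟩, ⟨m, hm⟩⟩

/-- The triangle inequality `‖f t‖ ≤ ‖f u‖ + dist (f u) (f t)` is an equality (both sides are
`t`), hence so is its instance in each coordinate. -/
lemma apply_mul_sub_apply_nonneg (i : Fin 2) {u t : ℝ≥0} (hut : u ≤ t) :
    0 ≤ f u i * (f t i - f u i) := by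
  have hsum : |f t 0| + |f t 1| = (|f u 0| + |f u 1|) + (|f t 0 - f u 0| + |f t 1 - f u 1|) := by
    rw [← PlaneL1.norm_eq, ← PlaneL1.norm_eq, ← PlaneL1.dist_eq, norm_apply, norm_apply,
      dist_comm, dist_apply_of_le f hut]
    ring
  have htri (j : Fin 2) := abs_sub_abs_le_abs_sub (f t j) (f u j)
  rw [← abs_add_eq_add_abs_iff_mul_nonneg, add_sub_cancel]
  fin_cases i <;> simp <;> linarith [htri 0, htri 1]

def MonotoneWithSigns (ε : Fin 2 → ℝ) : Prop := ∀ i, Monotone fun t => ε i * f t i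

lemma exists_monotoneWithSigns : ∃ ε : Fin 2 → ℝ, (∀ i, |ε i| = 1) ∧ f.MonotoneWithSigns ε := by
  choose ε hε using fun i =>
    exists_abs_eq_one_monotone_mul fun u t => f.apply_mul_sub_apply_nonneg i
  exact ⟨ε, fun i => (hε i).1, fun i => (hε i).2⟩

variable {f}

lemma exists_nat_forall_eqOn_imp_mem {V : Set RaySpace} (hV : V ∈ 𝓝 f) :
    ∃ n : ℕ, ∀ g : RaySpace, (∀ t ≤ (n : ℝ≥0), g t = f t) → g ∈ V := by
  obtain ⟨W, hW, hWV⟩ := (mem_nhds_subtype _ f V).1 hV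
  obtain ⟨K, hK, hKW⟩ := UniformOnFun.exists_forall_eqOn_imp_mem ⟨∅, isCompact_empty⟩
    (fun K₁ h₁ K₂ h₂ => ⟨K₁ ∪ K₂, h₁.union h₂, Set.subset_union_left, Set.subset_union_right⟩) hW
  obtain ⟨c, hc⟩ := hK.bddAbove
  exact ⟨⌈c⌉₊, fun g hg => hWV (hKW g.1 fun t ht => hg t ((hc ht).trans (Nat.le_ceil c)))⟩

lemma MonotoneWithSigns.sub_mul_apply_nonneg {g : RaySpace} {ε : Fin 2 → ℝ}
    (hf : f.MonotoneWithSigns ε) (hε : ∀ i, |ε i| = 1) (hg : g.MonotoneWithSigns ε) (i : Fin 2)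
    {s t : ℝ≥0} (hst : s ≤ t) (u : ℝ≥0) : 0 ≤ (f t i - f s i) * g u i := by
  have hf' : 0 ≤ ε i * (f t i - f s i) := by linarith [hf i hst]
  have hg' : 0 ≤ ε i * g u i := by simpa [g.apply_zero] using hg i zero_le
  have hε' : ε i * ε i = 1 := by rw [← abs_mul_abs_self, hε i, one_mul]
  have : (f t i - f s i) * g u i = (ε i * (f t i - f s i)) * (ε i * g u i) := by
    linear_combination (-(f t i - f s i) * g u i) * hε'
  exact this ▸ mul_nonneg hf' hg'

noncomputable def concatFun (g : RaySpace) (n : ℕ) (t : ℝ≥0) : PlaneL1 :=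
  if t ≤ n then f t else f n + g (t - n)

variable {g : RaySpace} {n : ℕ} {t : ℝ≥0}

lemma concatFun_of_le (ht : t ≤ n) : f.concatFun g n t = f t := if_pos ht

lemma concatFun_of_lt (ht : n < t) : f.concatFun g n t = f n + g (t - n) := if_neg ht.not_ge

lemma concatFun_mem_grid (t : ℝ≥0) : f.concatFun g n t ∈ Grid := by
  rcases le_or_gt t n with htn | hnt
  · exact concatFun_of_le htn ▸ f.apply_mem_grid t
  · exact concatFun_of_lt hnt ▸
      add_mem_grid (f.apply_natCast_mem_intPoints n) (g.apply_mem_grid _)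

lemma dist_concatFun (hfg : ∀ i, ∀ s ≤ (n : ℝ≥0), ∀ u, 0 ≤ (f n i - f s i) * g u i)
    (s t : ℝ≥0) : dist (f.concatFun g n s) (f.concatFun g n t) = dist s t := by
  refine dist_eq_dist_of_forall_le (fun s t hst => ?_) s t
  rcases le_or_gt t n with htn | hnt
  · rw [concatFun_of_le htn, concatFun_of_le (hst.trans htn), f.dist_apply_of_le hst]
  have hcoe : ((t - n : ℝ≥0) : ℝ) = t - n := NNReal.coe_sub hnt.le
  rcases le_or_gt s n with hsn | hns
  · rw [concatFun_of_le hsn, concatFun_of_lt hnt,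
      PlaneL1.dist_add_eq_of_mul_nonneg fun i => hfg i s hsn _, f.dist_apply_of_le hsn,
      g.norm_apply, hcoe]
    push_cast; ring
  · rw [concatFun_of_lt hns, concatFun_of_lt hnt, dist_add_left,
      g.dist_apply_of_le (tsub_le_tsub_right hst _), hcoe, NNReal.coe_sub hns.le]
    push_cast; ring

variable (f g n)

noncomputable def concat (hfg : ∀ i, ∀ s ≤ (n : ℝ≥0), ∀ u, 0 ≤ (f n i - f s i) * g u i) :
    RaySpace :=
  ofFun (f.concatFun g n) (concatFun_of_le zero_le ▸ f.apply_zero) concatFun_mem_grid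
    (dist_concatFun hfg)

lemma asympRel_concat (hfg : ∀ i, ∀ s ≤ (n : ℝ≥0), ∀ u, 0 ≤ (f n i - f s i) * g u i) :
    AsympRel (f.concat g n hfg) g := by
  refine ⟨2 * n, fun t => ?_⟩
  change dist (f.concatFun g n t) (g t) ≤ 2 * n
  rcases le_or_gt t n with htn | hnt
  · have htn' : (t : ℝ) ≤ n := by exact_mod_cast htn
    calc dist (f.concatFun g n t) (g t) = dist (f t) (g t) := by rw [concatFun_of_le htn]
      _ ≤ ‖f t‖ + ‖g t‖ := dist_le_norm_add_norm _ _
      _ ≤ 2 * n := by rw [f.norm_apply, g.norm_apply]; linarith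
  · calc dist (f.concatFun g n t) (g t)
        ≤ dist (f n + g (t - n)) (g (t - n)) + dist (g (t - n)) (g t) := by
          rw [concatFun_of_lt hnt]; exact dist_triangle _ _ _
      _ = 2 * n := by
          rw [dist_add_self_left, f.norm_apply, g.dist_apply_of_le tsub_le_self,
            NNReal.coe_sub hnt.le]
          push_cast; ring

def axisRay (i : Fin 2) (a : ℝ) (ha : |a| = 1) : RaySpace :=
  ofFun (fun t => PiLp.single 1 i (a * t)) (by simp)
    (fun t => by
      fin_cases i
      · exact Or.inr ⟨0, by simp⟩
      · exact Or.inl ⟨0, by simp⟩)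
    (fun s t => by
      rw [PiLp.dist_single_same, Real.dist_eq, NNReal.dist_eq, ← mul_sub, abs_mul, ha, one_mul])

lemma monotoneWithSigns_axisRay {ε : Fin 2 → ℝ} (hε : ∀ i, |ε i| = 1) (i : Fin 2) :
    (axisRay i (ε i) (hε i)).MonotoneWithSigns ε := by
  intro j u t hut
  simp only [axisRay, coe_ofFun, PiLp.single_apply]
  split_ifs with hji
  · subst hji
    have hε' : ε j * ε j = 1 := by rw [← abs_mul_abs_self, hε j, one_mul]
    simpa [← mul_assoc, hε'] using hut
  · simp

end RaySpace

namespace VisualBoundary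

def mk (f : RaySpace) : VisualBoundary := Quot.mk AsympRel f

lemma mk_surjective : Function.Surjective mk := Quot.mk_surjective

lemma continuous_mk : Continuous mk := continuous_quot_mk

lemma mk_eq_mk {f g : RaySpace} (h : AsympRel f g) : mk f = mk g := Quot.sound h

lemma mk_mem_of_monotoneWithSigns {U : Set VisualBoundary} (hU : IsOpen U) {ε : Fin 2 → ℝ}
    (hε : ∀ i, |ε i| = 1) {f g : RaySpace} (hf : f.MonotoneWithSigns ε)
    (hg : g.MonotoneWithSigns ε) (hfU : mk f ∈ U) : mk g ∈ U := by
  obtain ⟨n, hn⟩ :=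
    RaySpace.exists_nat_forall_eqOn_imp_mem ((hU.preimage continuous_mk).mem_nhds hfU)
  have hfg := fun i s (hs : s ≤ (n : ℝ≥0)) u => hf.sub_mul_apply_nonneg hε hg i hs u
  rw [← mk_eq_mk (RaySpace.asympRel_concat f g n hfg)]
  exact hn _ fun t ht => RaySpace.concatFun_of_le ht

end VisualBoundary

open VisualBoundary RaySpace

/-- the visual boundary of `ℤ²` with the standard generating set
has the trivial (indiscrete) topology: its only open sets are `∅` and the whole
boundary. -/
theorem visualBoundary_Z2_trivial_topology :
    ∀ U : Set VisualBoundary, IsOpen U → U = ∅ ∨ U = Set.univ := by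
  intro U hU
  refine U.eq_empty_or_nonempty.imp_right fun ⟨x, hx⟩ => Set.eq_univ_of_forall fun y => ?_
  obtain ⟨f, rfl⟩ := mk_surjective x
  obtain ⟨g, rfl⟩ := mk_surjective y
  obtain ⟨εf, hεf, hf⟩ := f.exists_monotoneWithSigns
  obtain ⟨εg, hεg, hg⟩ := g.exists_monotoneWithSigns
  let ε : Fin 2 → ℝ := ![εf 0, εg 1]
  have hε : ∀ i, |ε i| = 1 := Fin.forall_fin_two.2 ⟨hεf 0, hεg 1⟩
  have h₀ := mk_mem_of_monotoneWithSigns hU hεf hf (monotoneWithSigns_axisRay hεf 0) hx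
  have h₁ := mk_mem_of_monotoneWithSigns hU hε (monotoneWithSigns_axisRay hε 0)
    (monotoneWithSigns_axisRay hε 1) h₀
  exact mk_mem_of_monotoneWithSigns hU hεg (monotoneWithSigns_axisRay hεg 1) hg h₁
end

section
/- In ℝ² with the ℓ¹ metric, any unit-speed geodesic ray f = (f₁, f₂) from the origin that passes through a point (x,y) with x > 0 and y > 0 at time t₀ satisfies f₁(t) ≥ x and f₂(t) ≥ y for all t > t₀ (i.e., both coordinates are monotone once the ray enters the open first quadrant). -/
/-- ℓ¹ distance on `ℝ²`. -/
def d1 (p q : ℝ × ℝ) : ℝ := |p.1 - q.1| + |p.2 - q.2|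

/-- A unit-speed geodesic ray from the origin in `(ℝ², ℓ¹)`. -/
def IsL1Ray (f : ℝ → ℝ × ℝ) : Prop :=
  f 0 = (0, 0) ∧ ∀ s t : ℝ, 0 ≤ s → 0 ≤ t → d1 (f s) (f t) = |s - t|

/-- a geodesic ray from the origin in `(ℝ², ℓ¹)` passing through
a point `(x, y)` with `x > 0`, `y > 0` at time `t₀` satisfies `f₁(t) ≥ x` and
`f₂(t) ≥ y` for all `t > t₀`. -/
theorem l1_ray_monotone_after_first_quadrant (f : ℝ → ℝ × ℝ) (hf : IsL1Ray f)
    (t₀ : ℝ) (ht₀ : 0 ≤ t₀) (x y : ℝ) (hx : 0 < x) (hy : 0 < y)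
    (hpt : f t₀ = (x, y)) :
    ∀ t : ℝ, t₀ < t → x ≤ (f t).1 ∧ y ≤ (f t).2 := by
  obtain ⟨h0, hd⟩ := hf
  intro t ht
  have ht' : 0 ≤ t := le_trans ht₀ ht.le
  have h1 := hd 0 t₀ le_rfl ht₀
  have h2 := hd 0 t le_rfl ht'
  have h3 := hd t₀ t ht₀ ht'
  simp only [h0, hpt] at h1 h2 h3
  simp only [d1] at h1 h2 h3
  set a := (f t).1 with ha
  set b := (f t).2 with hb
  rw [abs_of_nonpos (by linarith : (0:ℝ) - t₀ ≤ 0)] at h1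
  rw [abs_of_nonpos (by linarith : (0:ℝ) - t ≤ 0)] at h2
  rw [abs_of_nonpos (by linarith : t₀ - t ≤ 0)] at h3
  rw [abs_of_nonpos (by linarith : (0:ℝ) - x ≤ 0), abs_of_nonpos (by linarith : (0:ℝ) - y ≤ 0)] at h1
  have hxy : x + y = t₀ := by linarith
  rcases abs_cases ((0:ℝ) - a) with ⟨e1, _⟩ | ⟨e1, _⟩ <;>
  rcases abs_cases ((0:ℝ) - b) with ⟨e2, _⟩ | ⟨e2, _⟩ <;>
  rcases abs_cases (x - a) with ⟨e3, _⟩ | ⟨e3, _⟩ <;>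
  rcases abs_cases (y - b) with ⟨e4, _⟩ | ⟨e4, _⟩ <;>
  constructor <;> linarith
end

section
/- Given two geodesic rays f, g from the origin in (ℝ², ℓ¹) whose images lie in the closed first quadrant, and given b > 0, the concatenation g_b defined by g_b(t) = f(t) for t ≤ b and g_b(t) = f(b) + g(t) - g(b) for t > b is again a unit-speed geodesic ray from the origin, is asymptotic to g, and agrees with f on [0,b]. -/
lemma ray_sum (f : ℝ → ℝ × ℝ) (hf : IsL1Ray f)
    (hq : ∀ t : ℝ, 0 ≤ t → 0 ≤ (f t).1 ∧ 0 ≤ (f t).2)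
    (t : ℝ) (ht : 0 ≤ t) : (f t).1 + (f t).2 = t := by
  have h := hf.2 t 0 ht le_rfl
  rw [hf.1] at h
  simp only [d1, sub_zero] at h
  obtain ⟨h1, h2⟩ := hq t ht
  rw [abs_of_nonneg ht] at h
  rw [abs_of_nonneg (by simpa using h1), abs_of_nonneg (by simpa using h2)] at h
  simpa using h

lemma ray_mono (f : ℝ → ℝ × ℝ) (hf : IsL1Ray f)
    (hq : ∀ t : ℝ, 0 ≤ t → 0 ≤ (f t).1 ∧ 0 ≤ (f t).2)
    {s t : ℝ} (hs : 0 ≤ s) (hst : s ≤ t) :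
    (f s).1 ≤ (f t).1 ∧ (f s).2 ≤ (f t).2 := by
  have ht : 0 ≤ t := hs.trans hst
  have h := hf.2 s t hs ht
  simp only [d1] at h
  rw [show |s - t| = t - s by rw [abs_of_nonpos (by linarith)]; ring] at h
  have hsum1 := ray_sum f hf hq s hs
  have hsum2 := ray_sum f hf hq t ht
  have e1 : (f s).1 - (f t).1 ≤ |(f s).1 - (f t).1| := le_abs_self _
  have e2 : (f s).2 - (f t).2 ≤ |(f s).2 - (f t).2| := le_abs_self _
  have n1 : -((f s).1 - (f t).1) ≤ |(f s).1 - (f t).1| := neg_le_abs _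
  have n2 : -((f s).2 - (f t).2) ≤ |(f s).2 - (f t).2| := neg_le_abs _
  constructor <;> linarith

/-- if `f, g` are geodesic rays from the origin in `(ℝ², ℓ¹)`
lying in the closed first quadrant and `b > 0`, then the concatenation
`g_b(t) = f(t)` for `t ≤ b`, `g_b(t) = f(b) + g(t) - g(b)` for `t > b`,
is again a geodesic ray from the origin, is asymptotic to `g`, and agrees
with `f` on `[0, b]`. -/
theorem l1_ray_concatenation (f g : ℝ → ℝ × ℝ) (hf : IsL1Ray f) (hg : IsL1Ray g)
    (hfq : ∀ t : ℝ, 0 ≤ t → 0 ≤ (f t).1 ∧ 0 ≤ (f t).2)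
    (hgq : ∀ t : ℝ, 0 ≤ t → 0 ≤ (g t).1 ∧ 0 ≤ (g t).2)
    (b : ℝ) (hb : 0 < b) :
    IsL1Ray (fun t => if t ≤ b then f t else f b + g t - g b) ∧
    (∃ M : ℝ, ∀ t : ℝ, 0 ≤ t →
      d1 ((fun t => if t ≤ b then f t else f b + g t - g b) t) (g t) ≤ M) ∧
    (∀ t : ℝ, t ∈ Set.Icc 0 b →
      (fun t => if t ≤ b then f t else f b + g t - g b) t = f t) := by
  have hb0 : (0:ℝ) ≤ b := hb.le
  -- key mixed case
  have key : ∀ s t : ℝ, 0 ≤ s → s ≤ b → b < t →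
      d1 (f s) (f b + g t - g b) = t - s := by
    intro s t hs hsb hbt
    have ht : 0 ≤ t := by linarith
    obtain ⟨m1, m2⟩ := ray_mono f hf hfq hs hsb
    obtain ⟨n1, n2⟩ := ray_mono g hg hgq hb0 hbt.le
    have sfs := ray_sum f hf hfq s hs
    have sfb := ray_sum f hf hfq b hb0
    have sgb := ray_sum g hg hgq b hb0
    have sgt := ray_sum g hg hgq t ht
    simp only [d1, Prod.fst_add, Prod.fst_sub, Prod.snd_add, Prod.snd_sub]
    rw [abs_of_nonpos (by linarith), abs_of_nonpos (by linarith)]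
    linarith
  refine ⟨⟨?_, ?_⟩, ⟨2*b + d1 (f b) (g b), ?_⟩, ?_⟩
  · simp only [if_pos hb0, hf.1]
  · intro s t hs ht
    by_cases hsb : s ≤ b <;> by_cases htb : t ≤ b <;>
      simp only [if_pos, if_neg, hsb, htb, if_true, if_false]
    · exact hf.2 s t hs ht
    · rw [key s t hs hsb (lt_of_not_ge htb), abs_of_nonpos (by push_neg at htb; linarith)]
      ring
    · have : d1 (f b + g s - g b) (f t) = d1 (f t) (f b + g s - g b) := by
        simp [d1, abs_sub_comm]
      rw [this, key t s ht htb (lt_of_not_ge hsb), abs_of_nonneg (by push_neg at hsb; linarith)]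
    · have h := hg.2 s t hs ht
      simp only [d1] at h ⊢
      simp only [Prod.fst_add, Prod.fst_sub, Prod.snd_add, Prod.snd_sub]
      rw [show (f b).1 + (g s).1 - (g b).1 - ((f b).1 + (g t).1 - (g b).1) = (g s).1 - (g t).1 by ring,
        show (f b).2 + (g s).2 - (g b).2 - ((f b).2 + (g t).2 - (g b).2) = (g s).2 - (g t).2 by ring]
      exact h
  · intro t ht
    by_cases htb : t ≤ b <;> simp only [if_pos, if_neg, htb, if_true, if_false]
    · obtain ⟨hf1, hf2⟩ := hfq t ht
      obtain ⟨hg1, hg2⟩ := hgq t ht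
      have sft := ray_sum f hf hfq t ht
      have sgt := ray_sum g hg hgq t ht
      have hd1 := abs_nonneg ((f b).1 - (g b).1)
      have hd2 := abs_nonneg ((f b).2 - (g b).2)
      simp only [d1]
      have h1 : |(f t).1 - (g t).1| ≤ (f t).1 + (g t).1 :=
        abs_le.mpr ⟨by linarith, by linarith⟩
      have h2 : |(f t).2 - (g t).2| ≤ (f t).2 + (g t).2 :=
        abs_le.mpr ⟨by linarith, by linarith⟩
      linarith
    · simp only [d1, Prod.fst_add, Prod.fst_sub, Prod.snd_add, Prod.snd_sub]
      rw [show (f b).1 + (g t).1 - (g b).1 - (g t).1 = (f b).1 - (g b).1 by ring,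
        show (f b).2 + (g t).2 - (g b).2 - (g t).2 = (f b).2 - (g b).2 by ring]
      linarith
  · intro t ht
    simp only [if_pos ht.2]
end
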